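/- For all k, j ∈ {0,1,2,3,4,5} and every pair (X₀,Q) of elements of X with (X₀,Q) ∈ R_k, the number of R ∈ X with (Q,R) ∈ R₂ and (X₀,R) ∈ R_j equals the (k,j) entry of the matrix L₂ with rows (indexed by k = 0,…,5) [0, 0, q−1, 0, 0, 0], [0, 0, 0, q−1, 0, 0], [1, 0, q−2, 0, 0, 0], [0, 1, 0, q−2, 0, 0], [0, 0, 0, 0, q−2, 1], [0, 0, 0, 0, q−1, 0]. -/

import Mathlib

namespace HermitianScheme

open Polynomial in
private lemma root_ncard_le {K : Type*} [Field K] (pl : Polynomial K) (h0 : pl ≠ 0) :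
    {x : K | pl.IsRoot x}.ncard ≤ pl.natDegree := by
  classical
  have hset : {x : K | pl.IsRoot x} = ↑pl.roots.toFinset := by
    ext x; simp [Polynomial.mem_roots, h0]
  rw [hset, Set.ncard_coe_finset]
  exact le_trans (Multiset.toFinset_card_le _) (Polynomial.card_roots' pl)

open Polynomial in
private lemma pow_cond_ncard_le {K : Type*} [Field K] (q : ℕ) (hq2 : 2 ≤ q) (c : K) :
    {x : K | x ^ q = c * x}.ncard ≤ q := by
  have h0 : (X ^ q - C c * X : Polynomial K) ≠ 0 := by
    intro h
    have := congrArg (fun p => Polynomial.coeff p q) h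
    simp [Polynomial.coeff_X_pow, Polynomial.coeff_C_mul, Polynomial.coeff_X] at this
    rw [if_neg (by omega : ¬ 1 = q)] at this
    simp at this
  have hset : {x : K | x ^ q = c * x} = {x : K | (X ^ q - C c * X : Polynomial K).IsRoot x} := by
    ext x; simp [Polynomial.IsRoot, sub_eq_zero]
  rw [hset]
  refine le_trans (root_ncard_le _ h0) ?_
  refine le_trans (Polynomial.natDegree_sub_le _ _) ?_
  simp [Polynomial.natDegree_X_pow]
  refine le_trans (Polynomial.natDegree_mul_le) ?_
  simp; omega

private lemma Tcard {K : Type*} [Field K] [Fintype K] (q : ℕ) (hq2 : 2 ≤ q)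
    (hK : Fintype.card K = q ^ 2)
    (hadd : ∀ x y : K, (x + y) ^ q = x ^ q + y ^ q) :
    {f : K | f ^ q = -f}.ncard = q := by
  classical
  have hsq : ∀ x : K, (x ^ q) ^ q = x := by
    intro x
    rw [← pow_mul, ← sq, ← hK, FiniteField.pow_card]
  let ψ : K →+ K := AddMonoidHom.mk' (fun x => x + x ^ q) (by
    intro a b; simp only [hadd]; ring)
  have hker : (ψ.ker : Set K) = {f : K | f ^ q = -f} := by
    ext x
    simp only [SetLike.mem_coe, AddMonoidHom.mem_ker, Set.mem_setOf_eq]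
    show x + x ^ q = 0 ↔ _
    rw [add_comm, add_eq_zero_iff_eq_neg]
  have hrange : (ψ.range : Set K) ⊆ {x : K | x ^ q = x} := by
    rintro y ⟨x, rfl⟩
    show (x + x ^ q) ^ q = x + x ^ q
    rw [hadd, hsq]; ring
  have hTle : {f : K | f ^ q = -f}.ncard ≤ q := by
    have := pow_cond_ncard_le q hq2 (-1 : K)
    simpa [neg_one_mul] using this
  have hFle : {x : K | x ^ q = x}.ncard ≤ q := by
    have := pow_cond_ncard_le q hq2 (1 : K)
    simpa using this
  have hrle : Nat.card ψ.range ≤ q := by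
    have e1 : Nat.card ψ.range = (ψ.range : Set K).ncard := Nat.card_coe_set_eq _
    rw [e1]
    exact le_trans (Set.ncard_le_ncard hrange (Set.toFinite _)) hFle
  have hkeq : Nat.card ψ.ker = {f : K | f ^ q = -f}.ncard := by
    have e1 : Nat.card ψ.ker = (ψ.ker : Set K).ncard := Nat.card_coe_set_eq _
    rw [e1, hker]
  have hprod : q ^ 2 = Nat.card ψ.range * Nat.card ψ.ker := by
    rw [← hK, ← Nat.card_eq_fintype_card,
      AddSubgroup.card_eq_card_quotient_mul_card_addSubgroup ψ.ker,
      Nat.card_congr (QuotientAddGroup.quotientKerEquivRange ψ).toEquiv]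
  have hkle : Nat.card ψ.ker ≤ q := by rw [hkeq]; exact hTle
  have hqle : q ≤ Nat.card ψ.ker := by
    by_contra h
    push_neg at h
    have h1 : Nat.card ψ.range * Nat.card ψ.ker ≤ q * Nat.card ψ.ker :=
      Nat.mul_le_mul_right _ hrle
    have h2 : q * Nat.card ψ.ker < q * q :=
      (Nat.mul_lt_mul_left (show 0 < q by omega)).mpr h
    have : q ^ 2 < q * q := lt_of_eq_of_lt hprod (lt_of_le_of_lt h1 h2)
    simp [sq] at this
  rw [← hkeq]
  omega

private lemma qadd_aux {K : Type*} [Field K] [Fintype K] (q : ℕ) (hq : IsPrimePow q)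
    (hodd : Odd q) (hK : Fintype.card K = q ^ 2) :
    (∀ x y : K, (x + y) ^ q = x ^ q + y ^ q) ∧ (2 : K) ≠ 0 := by
  obtain ⟨p, n, hp, hn, rfl⟩ := hq
  have pp : p.Prime := hp.nat_prime
  have podd : Odd p := by
    rcases Nat.Prime.eq_two_or_odd' pp with h2 | h
    · exfalso
      rw [h2] at hodd
      have : Even ((2:ℕ) ^ n) := (Nat.even_pow).mpr ⟨even_two, by omega⟩
      exact (Nat.not_odd_iff_even.mpr this) hodd
    · exact h
  have rcp : CharP K (ringChar K) := ringChar.charP K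
  obtain ⟨m, hrp, hcard⟩ := FiniteField.card K (ringChar K)
  have hpr : p = ringChar K := by
    have hd : p ∣ (ringChar K) ^ (m : ℕ) := by
      rw [← hcard, hK]
      exact dvd_pow (dvd_pow_self p (by omega)) (by omega)
    exact (Nat.prime_dvd_prime_iff_eq pp hrp).mp (pp.dvd_of_dvd_pow hd)
  haveI : CharP K p := hpr ▸ rcp
  haveI : Fact p.Prime := ⟨pp⟩
  haveI : ExpChar K p := ExpChar.prime pp
  constructor
  · intro x y; exact add_pow_char_pow (R := K) (p := p) (n := n) x y
  · intro h2
    have : (p : ℕ) ∣ 2 := (CharP.cast_eq_zero_iff K p 2).mp (by exact_mod_cast h2)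
    have hp2 : p = 2 := (Nat.prime_dvd_prime_iff_eq pp Nat.prime_two).mp this
    rw [hp2] at podd
    exact (by decide : ¬ Odd 2) podd

variable (K : Type*) [Field K]

/-- The set `X` of points `⟨(1, r₁, r₂, r₃)⟩` of the Hermitian surface `H(3,q²)`
not collinear with `P = ⟨(0,0,0,1)⟩`, parametrized by triples `(r₁, r₂, r₃)` with
`r₃ + r₃^q = r₁^(q+1) + r₂^(q+1)`. -/
def Xset (q : ℕ) : Set (K × K × K) :=
  {r | r.2.2 + r.2.2 ^ q = r.1 ^ (q + 1) + r.2.1 ^ (q + 1)}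

/-- `w(R,S) = s₃^q - r₁ s₁^q - r₂ s₂^q + r₃`, a representative of Shult's
invariant `z(P,R,S) ∈ K^*/F^*`. -/
def wfun (q : ℕ) (R S : K × K × K) : K :=
  S.2.2 ^ q - R.1 * S.1 ^ q - R.2.1 * S.2.1 ^ q + R.2.2

/-- The relations `R₀, …, R₅` of the association scheme `𝔛_P` on `X`. -/
def Rel (q : ℕ) : ℕ → (K × K × K) → (K × K × K) → Prop
  | 0 => fun R S => R = S
  | 1 => fun R S => R ≠ S ∧ wfun K q R S = 0
  | 2 => fun R S => R ≠ S ∧ R.1 = S.1 ∧ R.2.1 = S.2.1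
  | 3 => fun R S => wfun K q R S ≠ 0 ∧ wfun K q R S ^ q = - wfun K q R S ∧
      ¬ (R.1 = S.1 ∧ R.2.1 = S.2.1)
  | 4 => fun R S => wfun K q R S ^ q ≠ wfun K q R S ∧ wfun K q R S ^ q ≠ - wfun K q R S
  | 5 => fun R S => wfun K q R S ≠ 0 ∧ wfun K q R S ^ q = wfun K q R S
  | _ => fun _ _ => False

/-- The intersection matrix `L2` of the scheme `𝔛_P` (entries as
polynomials in `q`, over `ℤ`). -/
def L2 (q : ℤ) : Matrix (Fin 6) (Fin 6) ℤ :=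
  !![0, 0, q-1, 0, 0, 0;
     0, 0, 0, q-1, 0, 0;
     1, 0, q-2, 0, 0, 0;
     0, 1, 0, q-2, 0, 0;
     0, 0, 0, 0, q-2, 1;
     0, 0, 0, 0, q-1, 0]

/-- Lemma 3: the intersection numbers `p_{2j}^k` are well defined and are
given by the matrix `L2`. -/
theorem statement5 (q : ℕ) (hq : IsPrimePow q) (hodd : Odd q)
    (K : Type*) [Field K] [Fintype K] (hK : Fintype.card K = q ^ 2) :
    ∀ k j : Fin 6, ∀ X₀ ∈ Xset K q, ∀ Q ∈ Xset K q, Rel K q k.val X₀ Q →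
      ({R | R ∈ Xset K q ∧ Rel K q 2 Q R ∧ Rel K q j.val X₀ R}.ncard : ℤ) =
        L2 (q : ℤ) k j := by
  intro k j X₀ hX₀ Q hQ hk
  obtain ⟨hadd, h2⟩ := qadd_aux q hq hodd hK
  have hq2 : 2 ≤ q := hq.two_le
  have hT : {f : K | f ^ q = -f}.ncard = q := Tcard q hq2 hK hadd
  have h0q : (0 : K) ^ q = 0 := zero_pow (by omega)
  have hneg : ∀ x : K, (-x) ^ q = -(x ^ q) := by
    intro x
    have h := hadd x (-x)
    simp only [add_neg_cancel, h0q] at h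
    linear_combination -h
  have hsub : ∀ x y : K, (x - y) ^ q = x ^ q - y ^ q := by
    intro x y; rw [sub_eq_add_neg, hadd, hneg, sub_eq_add_neg]
  have hsq : ∀ x : K, (x ^ q) ^ q = x := by
    intro x; rw [← pow_mul, ← sq, ← hK, FiniteField.pow_card]
  have h2q : (2 : K) ^ q = 2 := by
    rw [(by norm_num : (2:K) = 1 + 1), hadd]; norm_num
  -- the Xset equations with `pow_succ` unfolded
  have hX₀' : X₀.2.2 + X₀.2.2 ^ q = X₀.1 ^ q * X₀.1 + X₀.2.1 ^ q * X₀.2.1 := by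
    have := hX₀
    simp only [Xset, Set.mem_setOf_eq, pow_succ] at this
    exact this
  have hQ' : Q.2.2 + Q.2.2 ^ q = Q.1 ^ q * Q.1 + Q.2.1 ^ q * Q.2.1 := by
    have := hQ
    simp only [Xset, Set.mem_setOf_eq, pow_succ] at this
    exact this
  set g : K → K × K × K := fun f => (Q.1, Q.2.1, Q.2.2 + f) with hg
  -- parametrization of the R₂-neighbours of Q
  have hparam : ∀ C : (K × K × K) → Prop,
      {R | R ∈ Xset K q ∧ Rel K q 2 Q R ∧ C R}
        = g '' {f | f ^ q = -f ∧ f ≠ 0 ∧ C (g f)} := by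
    intro C
    ext R
    simp only [Set.mem_setOf_eq, Set.mem_image]
    constructor
    · rintro ⟨hRX, ⟨hne, h1c, h21⟩, hC⟩
      have hRX' : R.2.2 + R.2.2 ^ q = R.1 ^ q * R.1 + R.2.1 ^ q * R.2.1 := by
        have := hRX
        simp only [Xset, Set.mem_setOf_eq, pow_succ] at this
        exact this
      have hgR : g (R.2.2 - Q.2.2) = R := by
        simp only [hg]
        ext <;> simp [h1c, h21]
      refine ⟨R.2.2 - Q.2.2, ⟨?_, ?_, ?_⟩, hgR⟩
      · rw [hsub]
        rw [← h1c, ← h21] at hRX'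
        linear_combination hRX' - hQ'
      · intro h0
        apply hne
        have h3 : Q.2.2 = R.2.2 := by linear_combination -h0
        exact Prod.ext h1c (Prod.ext h21 h3)
      · rw [hgR]; exact hC
    · rintro ⟨f, ⟨hf, hf0, hC⟩, rfl⟩
      refine ⟨?_, ⟨?_, rfl, rfl⟩, hC⟩
      · show (Q.2.2 + f) + (Q.2.2 + f) ^ q = Q.1 ^ (q + 1) + Q.2.1 ^ (q + 1)
        rw [hadd, hf]
        simp only [pow_succ]
        linear_combination hQ'
      · intro h
        apply hf0
        have := congrArg (fun r : K × K × K => r.2.2) h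
        simp only [hg] at this
        linear_combination -this
  have hcount : ∀ jj : ℕ,
      {R | R ∈ Xset K q ∧ Rel K q 2 Q R ∧ Rel K q jj X₀ R}.ncard
        = {f : K | f ^ q = -f ∧ f ≠ 0 ∧ Rel K q jj X₀ (g f)}.ncard := by
    intro jj
    rw [hparam (Rel K q jj X₀)]
    apply Set.ncard_image_of_injOn
    intro a _ b _ hab
    have := congrArg (fun r : K × K × K => r.2.2) hab
    simp only [hg] at this
    linear_combination this
  set w : K := wfun K q X₀ Q with hw
  have hwf : ∀ f : K, f ^ q = -f → wfun K q X₀ (g f) = w - f := by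
    intro f hf
    simp only [wfun, hg, hw, hadd, hf]
    ring
  -- counting helper lemmas
  have hTfin : {f : K | f ^ q = -f}.Finite := Set.toFinite _
  have h0T : (0 : K) ∈ {f : K | f ^ q = -f} := by simp [h0q]
  have hempty : ∀ C : K → Prop, (∀ f : K, f ^ q = -f → f ≠ 0 → ¬ C f) →
      {f : K | f ^ q = -f ∧ f ≠ 0 ∧ C f}.ncard = 0 := by
    intro C hC
    rw [Set.ncard_eq_zero (Set.toFinite _)]
    ext f
    simp only [Set.mem_setOf_eq, Set.mem_empty_iff_false, iff_false, not_and]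
    intro hf hf0 hCf
    exact hC f hf hf0 hCf
  have hall : ∀ C : K → Prop, (∀ f : K, f ^ q = -f → f ≠ 0 → C f) →
      {f : K | f ^ q = -f ∧ f ≠ 0 ∧ C f}.ncard = q - 1 := by
    intro C hC
    have hset : {f : K | f ^ q = -f ∧ f ≠ 0 ∧ C f} = {f : K | f ^ q = -f} \ {0} := by
      ext f
      simp only [Set.mem_setOf_eq, Set.mem_diff, Set.mem_singleton_iff]
      exact ⟨fun ⟨a, b, _⟩ => ⟨a, b⟩, fun ⟨a, b⟩ => ⟨a, b, hC f a b⟩⟩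
    rw [hset, Set.ncard_diff_singleton_of_mem h0T, hT]
  have hone : ∀ (C : K → Prop) (f₀ : K), f₀ ^ q = -f₀ → f₀ ≠ 0 →
      (∀ f : K, f ^ q = -f → f ≠ 0 → (C f ↔ f = f₀)) →
      {f : K | f ^ q = -f ∧ f ≠ 0 ∧ C f}.ncard = 1 := by
    intro C f₀ hf₀ hf₀0 hC
    have hset : {f : K | f ^ q = -f ∧ f ≠ 0 ∧ C f} = {f₀} := by
      ext f
      simp only [Set.mem_setOf_eq, Set.mem_singleton_iff]
      constructor
      · rintro ⟨a, b, c⟩; exact (hC f a b).mp c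
      · rintro rfl; exact ⟨hf₀, hf₀0, (hC _ hf₀ hf₀0).mpr rfl⟩
    rw [hset, Set.ncard_singleton]
  have htwo : ∀ (C : K → Prop) (f₀ : K), f₀ ^ q = -f₀ → f₀ ≠ 0 →
      (∀ f : K, f ^ q = -f → f ≠ 0 → (C f ↔ f ≠ f₀)) →
      {f : K | f ^ q = -f ∧ f ≠ 0 ∧ C f}.ncard = q - 2 := by
    intro C f₀ hf₀ hf₀0 hC
    have hset : {f : K | f ^ q = -f ∧ f ≠ 0 ∧ C f}
        = {f : K | f ^ q = -f} \ {0, f₀} := by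
      ext f
      simp only [Set.mem_setOf_eq, Set.mem_diff, Set.mem_insert_iff,
        Set.mem_singleton_iff]
      constructor
      · rintro ⟨a, b, c⟩
        refine ⟨a, ?_⟩
        push_neg
        exact ⟨b, (hC f a b).mp c⟩
      · rintro ⟨a, b⟩
        push_neg at b
        exact ⟨a, b.1, (hC f a b.1).mpr b.2⟩
    have hsub2 : ({0, f₀} : Set K) ⊆ {f : K | f ^ q = -f} := by
      rintro x (rfl | rfl)
      · exact h0T
      · exact hf₀
    rw [hset, Set.ncard_diff hsub2 (Set.toFinite _), hT, Set.ncard_pair (Ne.symm hf₀0)]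
  -- coordinate-equality consequences
  have hcoords : X₀.1 = Q.1 → X₀.2.1 = Q.2.1 →
      (w = X₀.2.2 - Q.2.2 ∧ w ^ q = -w) := by
    intro he1 he2
    have htr : X₀.2.2 + X₀.2.2 ^ q = Q.2.2 + Q.2.2 ^ q := by
      rw [hX₀', he1, he2, ← hQ']
    have hw1 : w = X₀.2.2 - Q.2.2 := by
      simp only [hw, wfun, he1, he2]
      linear_combination hQ'
    constructor
    · exact hw1
    · rw [hw1, hsub]
      linear_combination htr
  -- X₀ = g f criterion
  have hXg : ∀ f : K, X₀ = g f ↔ (X₀.1 = Q.1 ∧ X₀.2.1 = Q.2.1 ∧ X₀.2.2 = Q.2.2 + f) := by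
    intro f
    simp only [hg, Prod.ext_iff]

  have h2x : ∀ x : K, (2 : K) * x = 0 → x = 0 := by
    intro x hx
    rcases mul_eq_zero.mp hx with h | h
    · exact absurd h h2
    · exact h
  have hnotboth : ∀ x : K, x ^ q = -x → x ^ q = x → x = 0 := by
    intro x hx1 hx2
    exact h2x x (by linear_combination hx1 - hx2)
  rw [hcount j.val]
  fin_cases k
  · -- k = 0 : X₀ = Q
    have hE : X₀ = Q := hk
    subst hE
    have hw0 : w = 0 := by
      simp only [hw, wfun]
      linear_combination hQ'
    have hgne : ∀ f : K, f ≠ 0 → X₀ ≠ g f := by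
      intro f hf0 h
      apply hf0
      have h3 := congrArg (fun r : K × K × K => r.2.2) h
      simp only [hg] at h3
      linear_combination -h3
    have hwq' : ∀ f : K, f ^ q = -f → wfun K q X₀ (g f) ^ q = - wfun K q X₀ (g f) := by
      intro f hf
      rw [hwf f hf, hw0, hsub, h0q, hf]
      ring
    fin_cases j
    · show (({f : K | f ^ q = -f ∧ f ≠ 0 ∧ Rel K q 0 X₀ (g f)}.ncard : ℤ)) = L2 (q : ℤ) 0 0
      rw [show {f : K | f ^ q = -f ∧ f ≠ 0 ∧ Rel K q 0 X₀ (g f)}.ncard = 0 from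
        hempty _ (by intro f hf hf0 hC; exact hgne f hf0 hC)]
      rw [show L2 (q : ℤ) 0 0 = 0 from rfl]
      omega
    · show (({f : K | f ^ q = -f ∧ f ≠ 0 ∧ Rel K q 1 X₀ (g f)}.ncard : ℤ)) = L2 (q : ℤ) 0 1
      rw [show {f : K | f ^ q = -f ∧ f ≠ 0 ∧ Rel K q 1 X₀ (g f)}.ncard = 0 from
        hempty _ (by
          intro f hf hf0 hC
          obtain ⟨-, hz⟩ := hC
          rw [hwf f hf, hw0] at hz
          exact hf0 (by linear_combination -hz))]
      rw [show L2 (q : ℤ) 0 1 = 0 from rfl]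
      omega
    · show (({f : K | f ^ q = -f ∧ f ≠ 0 ∧ Rel K q 2 X₀ (g f)}.ncard : ℤ)) = L2 (q : ℤ) 0 2
      rw [show {f : K | f ^ q = -f ∧ f ≠ 0 ∧ Rel K q 2 X₀ (g f)}.ncard = q - 1 from
        hall _ (by intro f hf hf0; exact ⟨hgne f hf0, rfl, rfl⟩)]
      rw [show L2 (q : ℤ) 0 2 = (q : ℤ) - 1 from rfl]
      omega
    · show (({f : K | f ^ q = -f ∧ f ≠ 0 ∧ Rel K q 3 X₀ (g f)}.ncard : ℤ)) = L2 (q : ℤ) 0 3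
      rw [show {f : K | f ^ q = -f ∧ f ≠ 0 ∧ Rel K q 3 X₀ (g f)}.ncard = 0 from
        hempty _ (by
          intro f hf hf0 hC
          obtain ⟨-, -, hne3⟩ := hC
          exact hne3 ⟨rfl, rfl⟩)]
      rw [show L2 (q : ℤ) 0 3 = 0 from rfl]
      omega
    · show (({f : K | f ^ q = -f ∧ f ≠ 0 ∧ Rel K q 4 X₀ (g f)}.ncard : ℤ)) = L2 (q : ℤ) 0 4
      rw [show {f : K | f ^ q = -f ∧ f ≠ 0 ∧ Rel K q 4 X₀ (g f)}.ncard = 0 from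
        hempty _ (by
          intro f hf hf0 hC
          obtain ⟨-, hb4⟩ := hC
          exact hb4 (hwq' f hf))]
      rw [show L2 (q : ℤ) 0 4 = 0 from rfl]
      omega
    · show (({f : K | f ^ q = -f ∧ f ≠ 0 ∧ Rel K q 5 X₀ (g f)}.ncard : ℤ)) = L2 (q : ℤ) 0 5
      rw [show {f : K | f ^ q = -f ∧ f ≠ 0 ∧ Rel K q 5 X₀ (g f)}.ncard = 0 from
        hempty _ (by
          intro f hf hf0 hC
          obtain ⟨hne0, heq⟩ := hC
          exact hne0 (hnotboth _ (hwq' f hf) heq))]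
      rw [show L2 (q : ℤ) 0 5 = 0 from rfl]
      omega
  · -- k = 1
    obtain ⟨hne', hwz⟩ : X₀ ≠ Q ∧ w = 0 := hk
    have hne : ¬ (X₀.1 = Q.1 ∧ X₀.2.1 = Q.2.1) := by
      rintro ⟨e1, e2⟩
      obtain ⟨hw1, -⟩ := hcoords e1 e2
      apply hne'
      have h3 : X₀.2.2 = Q.2.2 := by
        rw [← sub_eq_zero, ← hw1]; exact hwz
      exact Prod.ext e1 (Prod.ext e2 h3)
    have hXne : ∀ f : K, X₀ ≠ g f := by
      intro f h
      exact hne ⟨by rw [h], by rw [h]⟩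
    have hwq' : ∀ f : K, f ^ q = -f → wfun K q X₀ (g f) ^ q = - wfun K q X₀ (g f) := by
      intro f hf
      rw [hwf f hf, hwz, hsub, h0q, hf]
      ring
    fin_cases j
    · show (({f : K | f ^ q = -f ∧ f ≠ 0 ∧ Rel K q 0 X₀ (g f)}.ncard : ℤ)) = L2 (q : ℤ) 1 0
      rw [show {f : K | f ^ q = -f ∧ f ≠ 0 ∧ Rel K q 0 X₀ (g f)}.ncard = 0 from
        hempty _ (by intro f hf hf0 hC; exact hXne f hC)]
      rw [show L2 (q : ℤ) 1 0 = 0 from rfl]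
      omega
    · show (({f : K | f ^ q = -f ∧ f ≠ 0 ∧ Rel K q 1 X₀ (g f)}.ncard : ℤ)) = L2 (q : ℤ) 1 1
      rw [show {f : K | f ^ q = -f ∧ f ≠ 0 ∧ Rel K q 1 X₀ (g f)}.ncard = 0 from
        hempty _ (by
          intro f hf hf0 hC
          obtain ⟨-, hz⟩ := hC
          rw [hwf f hf, hwz] at hz
          exact hf0 (by linear_combination -hz))]
      rw [show L2 (q : ℤ) 1 1 = 0 from rfl]
      omega
    · show (({f : K | f ^ q = -f ∧ f ≠ 0 ∧ Rel K q 2 X₀ (g f)}.ncard : ℤ)) = L2 (q : ℤ) 1 2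
      rw [show {f : K | f ^ q = -f ∧ f ≠ 0 ∧ Rel K q 2 X₀ (g f)}.ncard = 0 from
        hempty _ (by
          intro f hf hf0 hC
          obtain ⟨-, e1, e2⟩ := hC
          exact hne ⟨e1, e2⟩)]
      rw [show L2 (q : ℤ) 1 2 = 0 from rfl]
      omega
    · show (({f : K | f ^ q = -f ∧ f ≠ 0 ∧ Rel K q 3 X₀ (g f)}.ncard : ℤ)) = L2 (q : ℤ) 1 3
      rw [show {f : K | f ^ q = -f ∧ f ≠ 0 ∧ Rel K q 3 X₀ (g f)}.ncard = q - 1 from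
        hall _ (by
          intro f hf hf0
          refine ⟨?_, hwq' f hf, fun e => hne ⟨e.1, e.2⟩⟩
          rw [hwf f hf, hwz]
          simpa using hf0)]
      rw [show L2 (q : ℤ) 1 3 = (q : ℤ) - 1 from rfl]
      omega
    · show (({f : K | f ^ q = -f ∧ f ≠ 0 ∧ Rel K q 4 X₀ (g f)}.ncard : ℤ)) = L2 (q : ℤ) 1 4
      rw [show {f : K | f ^ q = -f ∧ f ≠ 0 ∧ Rel K q 4 X₀ (g f)}.ncard = 0 from
        hempty _ (by
          intro f hf hf0 hC
          obtain ⟨-, hb4⟩ := hC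
          exact hb4 (hwq' f hf))]
      rw [show L2 (q : ℤ) 1 4 = 0 from rfl]
      omega
    · show (({f : K | f ^ q = -f ∧ f ≠ 0 ∧ Rel K q 5 X₀ (g f)}.ncard : ℤ)) = L2 (q : ℤ) 1 5
      rw [show {f : K | f ^ q = -f ∧ f ≠ 0 ∧ Rel K q 5 X₀ (g f)}.ncard = 0 from
        hempty _ (by
          intro f hf hf0 hC
          obtain ⟨hne0, heq⟩ := hC
          exact hne0 (hnotboth _ (hwq' f hf) heq))]
      rw [show L2 (q : ℤ) 1 5 = 0 from rfl]
      omega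
  · -- k = 2
    obtain ⟨hne', he1, he2⟩ : X₀ ≠ Q ∧ X₀.1 = Q.1 ∧ X₀.2.1 = Q.2.1 := hk
    obtain ⟨hw1, hwT⟩ := hcoords he1 he2
    have hwne0 : w ≠ 0 := by
      intro h
      apply hne'
      have h3 : X₀.2.2 = Q.2.2 := by
        rw [← sub_eq_zero, ← hw1]; exact h
      exact Prod.ext he1 (Prod.ext he2 h3)
    have hXgiff : ∀ f : K, X₀ = g f ↔ f = w := by
      intro f
      constructor
      · intro h
        have h3 := congrArg (fun r : K × K × K => r.2.2) h
        simp only [hg] at h3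
        rw [hw1]
        linear_combination -h3
      · rintro rfl
        refine Prod.ext he1 (Prod.ext he2 ?_)
        show X₀.2.2 = Q.2.2 + w
        rw [hw1]; ring
    have hwq' : ∀ f : K, f ^ q = -f → wfun K q X₀ (g f) ^ q = - wfun K q X₀ (g f) := by
      intro f hf
      rw [hwf f hf, hsub, hwT, hf]
      ring
    fin_cases j
    · show (({f : K | f ^ q = -f ∧ f ≠ 0 ∧ Rel K q 0 X₀ (g f)}.ncard : ℤ)) = L2 (q : ℤ) 2 0
      rw [show {f : K | f ^ q = -f ∧ f ≠ 0 ∧ Rel K q 0 X₀ (g f)}.ncard = 1 from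
        hone _ w hwT hwne0 (by intro f hf hf0; exact hXgiff f)]
      rw [show L2 (q : ℤ) 2 0 = 1 from rfl]
      omega
    · show (({f : K | f ^ q = -f ∧ f ≠ 0 ∧ Rel K q 1 X₀ (g f)}.ncard : ℤ)) = L2 (q : ℤ) 2 1
      rw [show {f : K | f ^ q = -f ∧ f ≠ 0 ∧ Rel K q 1 X₀ (g f)}.ncard = 0 from
        hempty _ (by
          intro f hf hf0 hC
          obtain ⟨hne2, hz⟩ := hC
          rw [hwf f hf] at hz
          exact hne2 ((hXgiff f).mpr (by linear_combination -hz)))]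
      rw [show L2 (q : ℤ) 2 1 = 0 from rfl]
      omega
    · show (({f : K | f ^ q = -f ∧ f ≠ 0 ∧ Rel K q 2 X₀ (g f)}.ncard : ℤ)) = L2 (q : ℤ) 2 2
      rw [show {f : K | f ^ q = -f ∧ f ≠ 0 ∧ Rel K q 2 X₀ (g f)}.ncard = q - 2 from
        htwo _ w hwT hwne0 (by
          intro f hf hf0
          constructor
          · rintro ⟨hne2, -, -⟩
            exact fun h => hne2 ((hXgiff f).mpr h)
          · intro hfw
            exact ⟨fun h => hfw ((hXgiff f).mp h), he1, he2⟩)]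
      rw [show L2 (q : ℤ) 2 2 = (q : ℤ) - 2 from rfl]
      omega
    · show (({f : K | f ^ q = -f ∧ f ≠ 0 ∧ Rel K q 3 X₀ (g f)}.ncard : ℤ)) = L2 (q : ℤ) 2 3
      rw [show {f : K | f ^ q = -f ∧ f ≠ 0 ∧ Rel K q 3 X₀ (g f)}.ncard = 0 from
        hempty _ (by
          intro f hf hf0 hC
          obtain ⟨-, -, hne3⟩ := hC
          exact hne3 ⟨he1, he2⟩)]
      rw [show L2 (q : ℤ) 2 3 = 0 from rfl]
      omega
    · show (({f : K | f ^ q = -f ∧ f ≠ 0 ∧ Rel K q 4 X₀ (g f)}.ncard : ℤ)) = L2 (q : ℤ) 2 4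
      rw [show {f : K | f ^ q = -f ∧ f ≠ 0 ∧ Rel K q 4 X₀ (g f)}.ncard = 0 from
        hempty _ (by
          intro f hf hf0 hC
          obtain ⟨-, hb4⟩ := hC
          exact hb4 (hwq' f hf))]
      rw [show L2 (q : ℤ) 2 4 = 0 from rfl]
      omega
    · show (({f : K | f ^ q = -f ∧ f ≠ 0 ∧ Rel K q 5 X₀ (g f)}.ncard : ℤ)) = L2 (q : ℤ) 2 5
      rw [show {f : K | f ^ q = -f ∧ f ≠ 0 ∧ Rel K q 5 X₀ (g f)}.ncard = 0 from
        hempty _ (by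
          intro f hf hf0 hC
          obtain ⟨hne0, heq⟩ := hC
          exact hne0 (hnotboth _ (hwq' f hf) heq))]
      rw [show L2 (q : ℤ) 2 5 = 0 from rfl]
      omega
  · -- k = 3
    obtain ⟨hw0, hwq3, hne⟩ : w ≠ 0 ∧ w ^ q = -w ∧ ¬ (X₀.1 = Q.1 ∧ X₀.2.1 = Q.2.1) := hk
    have hXne : ∀ f : K, X₀ ≠ g f := by
      intro f h
      exact hne ⟨by rw [h], by rw [h]⟩
    have hwq' : ∀ f : K, f ^ q = -f → wfun K q X₀ (g f) ^ q = - wfun K q X₀ (g f) := by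
      intro f hf
      rw [hwf f hf, hsub, hwq3, hf]
      ring
    fin_cases j
    · show (({f : K | f ^ q = -f ∧ f ≠ 0 ∧ Rel K q 0 X₀ (g f)}.ncard : ℤ)) = L2 (q : ℤ) 3 0
      rw [show {f : K | f ^ q = -f ∧ f ≠ 0 ∧ Rel K q 0 X₀ (g f)}.ncard = 0 from
        hempty _ (by intro f hf hf0 hC; exact hXne f hC)]
      rw [show L2 (q : ℤ) 3 0 = 0 from rfl]
      omega
    · show (({f : K | f ^ q = -f ∧ f ≠ 0 ∧ Rel K q 1 X₀ (g f)}.ncard : ℤ)) = L2 (q : ℤ) 3 1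
      rw [show {f : K | f ^ q = -f ∧ f ≠ 0 ∧ Rel K q 1 X₀ (g f)}.ncard = 1 from
        hone _ w hwq3 hw0 (by
          intro f hf hf0
          constructor
          · rintro ⟨-, hz⟩
            rw [hwf f hf] at hz
            linear_combination -hz
          · rintro rfl
            refine ⟨hXne w, ?_⟩
            rw [hwf w hf]
            ring)]
      rw [show L2 (q : ℤ) 3 1 = 1 from rfl]
      omega
    · show (({f : K | f ^ q = -f ∧ f ≠ 0 ∧ Rel K q 2 X₀ (g f)}.ncard : ℤ)) = L2 (q : ℤ) 3 2
      rw [show {f : K | f ^ q = -f ∧ f ≠ 0 ∧ Rel K q 2 X₀ (g f)}.ncard = 0 from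
        hempty _ (by
          intro f hf hf0 hC
          obtain ⟨-, e1, e2⟩ := hC
          exact hne ⟨e1, e2⟩)]
      rw [show L2 (q : ℤ) 3 2 = 0 from rfl]
      omega
    · show (({f : K | f ^ q = -f ∧ f ≠ 0 ∧ Rel K q 3 X₀ (g f)}.ncard : ℤ)) = L2 (q : ℤ) 3 3
      rw [show {f : K | f ^ q = -f ∧ f ≠ 0 ∧ Rel K q 3 X₀ (g f)}.ncard = q - 2 from
        htwo _ w hwq3 hw0 (by
          intro f hf hf0
          constructor
          · rintro ⟨hnz, -, -⟩
            intro hfw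
            apply hnz
            rw [hwf f hf, hfw]
            ring
          · intro hfw
            refine ⟨?_, hwq' f hf, fun e => hne ⟨e.1, e.2⟩⟩
            rw [hwf f hf]
            intro h
            exact hfw (by linear_combination -h))]
      rw [show L2 (q : ℤ) 3 3 = (q : ℤ) - 2 from rfl]
      omega
    · show (({f : K | f ^ q = -f ∧ f ≠ 0 ∧ Rel K q 4 X₀ (g f)}.ncard : ℤ)) = L2 (q : ℤ) 3 4
      rw [show {f : K | f ^ q = -f ∧ f ≠ 0 ∧ Rel K q 4 X₀ (g f)}.ncard = 0 from
        hempty _ (by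
          intro f hf hf0 hC
          obtain ⟨-, hb4⟩ := hC
          exact hb4 (hwq' f hf))]
      rw [show L2 (q : ℤ) 3 4 = 0 from rfl]
      omega
    · show (({f : K | f ^ q = -f ∧ f ≠ 0 ∧ Rel K q 5 X₀ (g f)}.ncard : ℤ)) = L2 (q : ℤ) 3 5
      rw [show {f : K | f ^ q = -f ∧ f ≠ 0 ∧ Rel K q 5 X₀ (g f)}.ncard = 0 from
        hempty _ (by
          intro f hf hf0 hC
          obtain ⟨hne0, heq⟩ := hC
          exact hne0 (hnotboth _ (hwq' f hf) heq))]
      rw [show L2 (q : ℤ) 3 5 = 0 from rfl]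
      omega
  · -- k = 4
    obtain ⟨ha, hb⟩ : w ^ q ≠ w ∧ w ^ q ≠ -w := hk
    have hne : ¬ (X₀.1 = Q.1 ∧ X₀.2.1 = Q.2.1) := fun e => hb (hcoords e.1 e.2).2
    have hXne : ∀ f : K, X₀ ≠ g f := by
      intro f h
      exact hne ⟨by rw [h], by rw [h]⟩
    have hw'ne : ∀ f : K, f ^ q = -f → f ≠ 0 → w - f ≠ 0 := by
      intro f hf hf0 h
      apply hb
      have hfw : f = w := by linear_combination -h
      exact hfw ▸ hf
    have hf₀T : ((w - w ^ q) / 2) ^ q = -((w - w ^ q) / 2) := by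
      rw [div_pow, hsub, hsq, h2q]
      ring
    have hf₀0 : (w - w ^ q) / 2 ≠ 0 := by
      intro h
      rcases div_eq_zero_iff.mp h with h' | h'
      · exact ha (by linear_combination -h')
      · exact h2 h'
    have hkey : ∀ f : K, f ^ q = -f → ((w - f) ^ q = w - f ↔ f = (w - w ^ q) / 2) := by
      intro f hf
      rw [hsub, hf]
      constructor
      · intro h
        rw [eq_div_iff h2]
        linear_combination h
      · intro h
        rw [h]
        field_simp
        ring
    fin_cases j
    · show (({f : K | f ^ q = -f ∧ f ≠ 0 ∧ Rel K q 0 X₀ (g f)}.ncard : ℤ)) = L2 (q : ℤ) 4 0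
      rw [show {f : K | f ^ q = -f ∧ f ≠ 0 ∧ Rel K q 0 X₀ (g f)}.ncard = 0 from
        hempty _ (by intro f hf hf0 hC; exact hXne f hC)]
      rw [show L2 (q : ℤ) 4 0 = 0 from rfl]
      omega
    · show (({f : K | f ^ q = -f ∧ f ≠ 0 ∧ Rel K q 1 X₀ (g f)}.ncard : ℤ)) = L2 (q : ℤ) 4 1
      rw [show {f : K | f ^ q = -f ∧ f ≠ 0 ∧ Rel K q 1 X₀ (g f)}.ncard = 0 from
        hempty _ (by
          intro f hf hf0 hC
          obtain ⟨-, hz⟩ := hC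
          rw [hwf f hf] at hz
          exact hw'ne f hf hf0 hz)]
      rw [show L2 (q : ℤ) 4 1 = 0 from rfl]
      omega
    · show (({f : K | f ^ q = -f ∧ f ≠ 0 ∧ Rel K q 2 X₀ (g f)}.ncard : ℤ)) = L2 (q : ℤ) 4 2
      rw [show {f : K | f ^ q = -f ∧ f ≠ 0 ∧ Rel K q 2 X₀ (g f)}.ncard = 0 from
        hempty _ (by
          intro f hf hf0 hC
          obtain ⟨-, e1, e2⟩ := hC
          exact hne ⟨e1, e2⟩)]
      rw [show L2 (q : ℤ) 4 2 = 0 from rfl]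
      omega
    · show (({f : K | f ^ q = -f ∧ f ≠ 0 ∧ Rel K q 3 X₀ (g f)}.ncard : ℤ)) = L2 (q : ℤ) 4 3
      rw [show {f : K | f ^ q = -f ∧ f ≠ 0 ∧ Rel K q 3 X₀ (g f)}.ncard = 0 from
        hempty _ (by
          intro f hf hf0 hC
          obtain ⟨-, hq3, -⟩ := hC
          rw [hwf f hf, hsub, hf] at hq3
          exact hb (by linear_combination hq3))]
      rw [show L2 (q : ℤ) 4 3 = 0 from rfl]
      omega
    · show (({f : K | f ^ q = -f ∧ f ≠ 0 ∧ Rel K q 4 X₀ (g f)}.ncard : ℤ)) = L2 (q : ℤ) 4 4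
      rw [show {f : K | f ^ q = -f ∧ f ≠ 0 ∧ Rel K q 4 X₀ (g f)}.ncard = q - 2 from
        htwo _ ((w - w ^ q) / 2) hf₀T hf₀0 (by
          intro f hf hf0
          constructor
          · rintro ⟨hq4, -⟩
            intro hff
            rw [hwf f hf] at hq4
            exact hq4 ((hkey f hf).mpr hff)
          · intro hff
            refine ⟨?_, ?_⟩
            · rw [hwf f hf]
              exact fun h => hff ((hkey f hf).mp h)
            · rw [hwf f hf, hsub, hf]
              intro h
              exact hb (by linear_combination h))]
      rw [show L2 (q : ℤ) 4 4 = (q : ℤ) - 2 from rfl]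
      omega
    · show (({f : K | f ^ q = -f ∧ f ≠ 0 ∧ Rel K q 5 X₀ (g f)}.ncard : ℤ)) = L2 (q : ℤ) 4 5
      rw [show {f : K | f ^ q = -f ∧ f ≠ 0 ∧ Rel K q 5 X₀ (g f)}.ncard = 1 from
        hone _ ((w - w ^ q) / 2) hf₀T hf₀0 (by
          intro f hf hf0
          constructor
          · rintro ⟨-, heq⟩
            rw [hwf f hf] at heq
            exact (hkey f hf).mp heq
          · intro hff
            refine ⟨?_, ?_⟩
            · rw [hwf f hf]
              exact hw'ne f hf hf0
            · rw [hwf f hf]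
              exact (hkey f hf).mpr hff)]
      rw [show L2 (q : ℤ) 4 5 = 1 from rfl]
      omega
  · -- k = 5
    obtain ⟨hw0, hwq5⟩ : w ≠ 0 ∧ w ^ q = w := hk
    have hne : ¬ (X₀.1 = Q.1 ∧ X₀.2.1 = Q.2.1) :=
      fun e => hw0 (hnotboth w (hcoords e.1 e.2).2 hwq5)
    have hXne : ∀ f : K, X₀ ≠ g f := by
      intro f h
      exact hne ⟨by rw [h], by rw [h]⟩
    fin_cases j
    · show (({f : K | f ^ q = -f ∧ f ≠ 0 ∧ Rel K q 0 X₀ (g f)}.ncard : ℤ)) = L2 (q : ℤ) 5 0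
      rw [show {f : K | f ^ q = -f ∧ f ≠ 0 ∧ Rel K q 0 X₀ (g f)}.ncard = 0 from
        hempty _ (by intro f hf hf0 hC; exact hXne f hC)]
      rw [show L2 (q : ℤ) 5 0 = 0 from rfl]
      omega
    · show (({f : K | f ^ q = -f ∧ f ≠ 0 ∧ Rel K q 1 X₀ (g f)}.ncard : ℤ)) = L2 (q : ℤ) 5 1
      rw [show {f : K | f ^ q = -f ∧ f ≠ 0 ∧ Rel K q 1 X₀ (g f)}.ncard = 0 from
        hempty _ (by
          intro f hf hf0 hC
          obtain ⟨-, hz⟩ := hC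
          rw [hwf f hf] at hz
          have hfw : f = w := by linear_combination -hz
          exact hw0 (hnotboth w (hfw ▸ hf) hwq5))]
      rw [show L2 (q : ℤ) 5 1 = 0 from rfl]
      omega
    · show (({f : K | f ^ q = -f ∧ f ≠ 0 ∧ Rel K q 2 X₀ (g f)}.ncard : ℤ)) = L2 (q : ℤ) 5 2
      rw [show {f : K | f ^ q = -f ∧ f ≠ 0 ∧ Rel K q 2 X₀ (g f)}.ncard = 0 from
        hempty _ (by
          intro f hf hf0 hC
          obtain ⟨-, e1, e2⟩ := hC
          exact hne ⟨e1, e2⟩)]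
      rw [show L2 (q : ℤ) 5 2 = 0 from rfl]
      omega
    · show (({f : K | f ^ q = -f ∧ f ≠ 0 ∧ Rel K q 3 X₀ (g f)}.ncard : ℤ)) = L2 (q : ℤ) 5 3
      rw [show {f : K | f ^ q = -f ∧ f ≠ 0 ∧ Rel K q 3 X₀ (g f)}.ncard = 0 from
        hempty _ (by
          intro f hf hf0 hC
          obtain ⟨-, hq3, -⟩ := hC
          rw [hwf f hf, hsub, hwq5, hf] at hq3
          exact hw0 (h2x w (by linear_combination hq3)))]
      rw [show L2 (q : ℤ) 5 3 = 0 from rfl]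
      omega
    · show (({f : K | f ^ q = -f ∧ f ≠ 0 ∧ Rel K q 4 X₀ (g f)}.ncard : ℤ)) = L2 (q : ℤ) 5 4
      rw [show {f : K | f ^ q = -f ∧ f ≠ 0 ∧ Rel K q 4 X₀ (g f)}.ncard = q - 1 from
        hall _ (by
          intro f hf hf0
          refine ⟨?_, ?_⟩
          · rw [hwf f hf, hsub, hwq5, hf]
            intro h
            exact hf0 (h2x f (by linear_combination h))
          · rw [hwf f hf, hsub, hwq5, hf]
            intro h
            exact hw0 (h2x w (by linear_combination h)))]
      rw [show L2 (q : ℤ) 5 4 = (q : ℤ) - 1 from rfl]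
      omega
    · show (({f : K | f ^ q = -f ∧ f ≠ 0 ∧ Rel K q 5 X₀ (g f)}.ncard : ℤ)) = L2 (q : ℤ) 5 5
      rw [show {f : K | f ^ q = -f ∧ f ≠ 0 ∧ Rel K q 5 X₀ (g f)}.ncard = 0 from
        hempty _ (by
          intro f hf hf0 hC
          obtain ⟨-, heq⟩ := hC
          rw [hwf f hf, hsub, hwq5, hf] at heq
          exact hf0 (h2x f (by linear_combination heq)))]
      rw [show L2 (q : ℤ) 5 5 = 0 from rfl]
      omega

end HermitianScheme
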